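/- Let λ : TG → GT be an entwining from a monad T = (T, m, e) to a comonad G = (G, δ, ε) on a category A, Ĝ the lifting of G to A_T, and K' : A → (A_T)^{Ĝ} a functor with U^{Ĝ} ∘ K' = φ_T, with corresponding right Ĝ-comodule structure on U_T whose component at (a, h_a) ∈ A_T is a morphism α_{(a,h_a)} : a → G(a). Then K' is an equivalence of categories if and only if (1) for every (a, h_a) ∈ A_T the composite G(h_a) ∘ λ_a ∘ T(α_{(a,h_a)}) : T(a) → G(a) is an isomorphism, and (2) the free functor φ_T : A → A_T is comonadic. -/

import Mathlib

open CategoryTheory CategoryTheory.Limits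

namespace Paper


variable {A : Type*} [Category A]

/-- An entwining (mixed distributive law) `λ : TG ⟶ GT` from a monad `T` to a comonad `G`. -/
structure Entwining (T : Monad A) (G : Comonad A) where
  lam : (G : A ⥤ A) ⋙ (T : A ⥤ A) ⟶ (T : A ⥤ A) ⋙ (G : A ⥤ A)
  comp_mul : ∀ a : A, T.μ.app ((G : A ⥤ A).obj a) ≫ lam.app a =
      (T : A ⥤ A).map (lam.app a) ≫ lam.app ((T : A ⥤ A).obj a) ≫
        (G : A ⥤ A).map (T.μ.app a)
  comp_unit : ∀ a : A, T.η.app ((G : A ⥤ A).obj a) ≫ lam.app a = (G : A ⥤ A).map (T.η.app a)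
  delta_comp : ∀ a : A, lam.app a ≫ G.δ.app ((T : A ⥤ A).obj a) =
      (T : A ⥤ A).map (G.δ.app a) ≫ lam.app ((G : A ⥤ A).obj a) ≫
        (G : A ⥤ A).map (lam.app a)
  eps_comp : ∀ a : A, lam.app a ≫ G.ε.app ((T : A ⥤ A).obj a) = (T : A ⥤ A).map (G.ε.app a)

namespace Entwining

variable {T : Monad A} {G : Comonad A} (E : Entwining T G)

lemma lam_natural {a b : A} (f : a ⟶ b) :
    (T : A ⥤ A).map ((G : A ⥤ A).map f) ≫ E.lam.app b =
      E.lam.app a ≫ (G : A ⥤ A).map ((T : A ⥤ A).map f) :=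
  E.lam.naturality f

/-- The value of the lifted comonad `Ĝ` on an object of `A_T`:
`Ĝ(a, h) = (G(a), G(h) ∘ λ_a)`. -/
@[simps]
def liftAlgebra (X : T.Algebra) : T.Algebra where
  A := (G : A ⥤ A).obj X.A
  a := E.lam.app X.A ≫ (G : A ⥤ A).map X.a
  unit := by
    rw [← Category.assoc, E.comp_unit, ← Functor.map_comp, X.unit]
    simp
  assoc := by
    calc T.μ.app ((G : A ⥤ A).obj X.A) ≫ E.lam.app X.A ≫ (G : A ⥤ A).map X.a
        = (T.μ.app ((G : A ⥤ A).obj X.A) ≫ E.lam.app X.A) ≫ (G : A ⥤ A).map X.a := by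
          rw [Category.assoc]
      _ = (T : A ⥤ A).map (E.lam.app X.A) ≫ E.lam.app ((T : A ⥤ A).obj X.A) ≫
            (G : A ⥤ A).map (T.μ.app X.A) ≫ (G : A ⥤ A).map X.a := by
          rw [E.comp_mul]; simp [Category.assoc]
      _ = (T : A ⥤ A).map (E.lam.app X.A) ≫ E.lam.app ((T : A ⥤ A).obj X.A) ≫
            (G : A ⥤ A).map ((T : A ⥤ A).map X.a) ≫ (G : A ⥤ A).map X.a := by
          rw [← Functor.map_comp, X.assoc, Functor.map_comp]
      _ = (T : A ⥤ A).map (E.lam.app X.A) ≫ (T : A ⥤ A).map ((G : A ⥤ A).map X.a) ≫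
            E.lam.app X.A ≫ (G : A ⥤ A).map X.a := by
          rw [← Category.assoc (E.lam.app ((T : A ⥤ A).obj X.A)), ← E.lam_natural X.a]
          simp [Category.assoc]
      _ = (T : A ⥤ A).map (E.lam.app X.A ≫ (G : A ⥤ A).map X.a) ≫
            E.lam.app X.A ≫ (G : A ⥤ A).map X.a := by
          rw [Functor.map_comp, Category.assoc]

/-- The lifting `Ĝ` of the comonad `G` to the Eilenberg–Moore category `A_T`
along the entwining `λ`. -/
@[simps]
def liftedComonad : Comonad (T.Algebra) where
  obj X := E.liftAlgebra X
  map {X Y} f :=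
    { f := (G : A ⥤ A).map f.f
      h := by
        try dsimp
        calc (T : A ⥤ A).map ((G : A ⥤ A).map f.f) ≫ E.lam.app Y.A ≫ (G : A ⥤ A).map Y.a
            = (E.lam.app X.A ≫ (G : A ⥤ A).map ((T : A ⥤ A).map f.f)) ≫
                (G : A ⥤ A).map Y.a := by
              rw [← Category.assoc, E.lam_natural f.f]
          _ = E.lam.app X.A ≫ (G : A ⥤ A).map ((T : A ⥤ A).map f.f ≫ Y.a) := by
              rw [Category.assoc, ← Functor.map_comp]
          _ = E.lam.app X.A ≫ (G : A ⥤ A).map (X.a ≫ f.f) := by rw [f.h]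
          _ = (E.lam.app X.A ≫ (G : A ⥤ A).map X.a) ≫ (G : A ⥤ A).map f.f := by
              rw [Functor.map_comp, Category.assoc] }
  map_id X := by ext; exact (G : A ⥤ A).map_id X.A
  map_comp f g := by ext; exact (G : A ⥤ A).map_comp f.f g.f
  ε :=
    { app := fun X =>
        { f := G.ε.app X.A
          h := by
            dsimp
            have hnat : (G : A ⥤ A).map X.a ≫ G.ε.app X.A =
                G.ε.app ((T : A ⥤ A).obj X.A) ≫ X.a := by
              simpa using (G.ε.naturality X.a).symm
            show (T : A ⥤ A).map (G.ε.app X.A) ≫ X.a =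
              (E.lam.app X.A ≫ (G : A ⥤ A).map X.a) ≫ G.ε.app X.A
            rw [Category.assoc, hnat, ← Category.assoc, E.eps_comp] }
      naturality := fun X Y f => by ext; exact G.ε.naturality f.f }
  δ :=
    { app := fun X =>
        { f := G.δ.app X.A
          h := by
            dsimp
            calc (T : A ⥤ A).map (G.δ.app X.A) ≫ E.lam.app ((G : A ⥤ A).obj X.A) ≫
                  (G : A ⥤ A).map (E.lam.app X.A ≫ (G : A ⥤ A).map X.a)
                = (T : A ⥤ A).map (G.δ.app X.A) ≫ E.lam.app ((G : A ⥤ A).obj X.A) ≫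
                    (G : A ⥤ A).map (E.lam.app X.A) ≫
                    (G : A ⥤ A).map ((G : A ⥤ A).map X.a) := by
                  rw [Functor.map_comp]
              _ = (E.lam.app X.A ≫ G.δ.app ((T : A ⥤ A).obj X.A)) ≫
                    (G : A ⥤ A).map ((G : A ⥤ A).map X.a) := by
                  rw [E.delta_comp]; simp [Category.assoc]
              _ = E.lam.app X.A ≫ (G : A ⥤ A).map X.a ≫ G.δ.app X.A := by
                  have hnat : (G : A ⥤ A).map X.a ≫ G.δ.app X.A =
                      G.δ.app ((T : A ⥤ A).obj X.A) ≫
                        (G : A ⥤ A).map ((G : A ⥤ A).map X.a) := by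
                    simpa using (G.δ.naturality X.a).symm
                  rw [hnat, Category.assoc]
              _ = (E.lam.app X.A ≫ (G : A ⥤ A).map X.a) ≫ G.δ.app X.A := by
                  rw [Category.assoc] }
      naturality := fun X Y f => by ext; exact G.δ.naturality f.f }
  coassoc X := by ext; exact G.coassoc X.A
  left_counit X := by ext; exact G.left_counit X.A
  right_counit X := by ext; exact G.right_counit X.A


/-- The value of the lifted monad `T̂` on an object of `A^G`: `T̂(a, θ) = (T(a), λ_a ∘ T(θ))`. -/
@[simps]
def liftCoalgebra (X : G.Coalgebra) : G.Coalgebra where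
  A := (T : A ⥤ A).obj X.A
  a := (T : A ⥤ A).map X.a ≫ E.lam.app X.A
  counit := by
    rw [Category.assoc, E.eps_comp, ← Functor.map_comp, X.counit]
    simp
  coassoc := by
    calc ((T : A ⥤ A).map X.a ≫ E.lam.app X.A) ≫ G.δ.app ((T : A ⥤ A).obj X.A)
        = (T : A ⥤ A).map X.a ≫ (T : A ⥤ A).map (G.δ.app X.A) ≫
            E.lam.app ((G : A ⥤ A).obj X.A) ≫ (G : A ⥤ A).map (E.lam.app X.A) := by
          rw [Category.assoc, E.delta_comp]
      _ = (T : A ⥤ A).map (X.a ≫ G.δ.app X.A) ≫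
            E.lam.app ((G : A ⥤ A).obj X.A) ≫ (G : A ⥤ A).map (E.lam.app X.A) := by
          rw [Functor.map_comp, Category.assoc]
      _ = (T : A ⥤ A).map X.a ≫ (T : A ⥤ A).map ((G : A ⥤ A).map X.a) ≫
            E.lam.app ((G : A ⥤ A).obj X.A) ≫ (G : A ⥤ A).map (E.lam.app X.A) := by
          rw [X.coassoc, Functor.map_comp, Category.assoc]
      _ = (T : A ⥤ A).map X.a ≫ E.lam.app X.A ≫
            (G : A ⥤ A).map ((T : A ⥤ A).map X.a) ≫ (G : A ⥤ A).map (E.lam.app X.A) := by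
          rw [← Category.assoc ((T : A ⥤ A).map ((G : A ⥤ A).map X.a)), E.lam_natural X.a]
          simp only [Category.assoc]
      _ = ((T : A ⥤ A).map X.a ≫ E.lam.app X.A) ≫
            (G : A ⥤ A).map ((T : A ⥤ A).map X.a ≫ E.lam.app X.A) := by
          rw [Functor.map_comp]
          simp only [Category.assoc]


/-- The lifting of the endofunctor `T` to `A^G`. -/
@[simps]
def liftFunctorT : G.Coalgebra ⥤ G.Coalgebra where
  obj X := E.liftCoalgebra X
  map {X Y} f :=
    { f := (T : A ⥤ A).map f.f
      h := by
        try dsimp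
        calc ((T : A ⥤ A).map X.a ≫ E.lam.app X.A) ≫ (G : A ⥤ A).map ((T : A ⥤ A).map f.f)
            = (T : A ⥤ A).map X.a ≫ E.lam.app X.A ≫
                (G : A ⥤ A).map ((T : A ⥤ A).map f.f) := by rw [Category.assoc]
          _ = (T : A ⥤ A).map X.a ≫ (T : A ⥤ A).map ((G : A ⥤ A).map f.f) ≫
                E.lam.app Y.A := by rw [← E.lam_natural f.f]
          _ = (T : A ⥤ A).map (X.a ≫ (G : A ⥤ A).map f.f) ≫ E.lam.app Y.A := by
              rw [Functor.map_comp, Category.assoc]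
          _ = (T : A ⥤ A).map (f.f ≫ Y.a) ≫ E.lam.app Y.A := by rw [f.h]
          _ = (T : A ⥤ A).map f.f ≫ (T : A ⥤ A).map Y.a ≫ E.lam.app Y.A := by
              rw [Functor.map_comp, Category.assoc] }
  map_id X := by ext; exact (T : A ⥤ A).map_id X.A
  map_comp f g := by ext; exact (T : A ⥤ A).map_comp f.f g.f

/-- The unit of the lifted monad. -/
@[simps]
def liftEta : 𝟭 (G.Coalgebra) ⟶ E.liftFunctorT where
  app X :=
    { f := T.η.app X.A
      h := by
        dsimp
        have hnat : X.a ≫ T.η.app ((G : A ⥤ A).obj X.A) =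
            T.η.app X.A ≫ (T : A ⥤ A).map X.a := by
          simpa using T.η.naturality X.a
        show X.a ≫ (G : A ⥤ A).map (T.η.app X.A) =
          T.η.app X.A ≫ (T : A ⥤ A).map X.a ≫ E.lam.app X.A
        rw [← Category.assoc, ← hnat, Category.assoc, E.comp_unit] }
  naturality X Y f := by
    ext
    show f.f ≫ T.η.app Y.A = T.η.app X.A ≫ (T : A ⥤ A).map f.f
    simpa using T.η.naturality f.f

/-- The multiplication of the lifted monad. -/
@[simps]
def liftMu : E.liftFunctorT ⋙ E.liftFunctorT ⟶ E.liftFunctorT where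
  app X :=
    { f := T.μ.app X.A
      h := by
        dsimp
        have hnat : (T : A ⥤ A).map ((T : A ⥤ A).map X.a) ≫
              T.μ.app ((G : A ⥤ A).obj X.A) = T.μ.app X.A ≫ (T : A ⥤ A).map X.a := by
          simpa using T.μ.naturality X.a
        calc ((T : A ⥤ A).map ((T : A ⥤ A).map X.a ≫ E.lam.app X.A) ≫
                E.lam.app ((T : A ⥤ A).obj X.A)) ≫ (G : A ⥤ A).map (T.μ.app X.A)
            = (T : A ⥤ A).map ((T : A ⥤ A).map X.a) ≫
                ((T : A ⥤ A).map (E.lam.app X.A) ≫ E.lam.app ((T : A ⥤ A).obj X.A) ≫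
                  (G : A ⥤ A).map (T.μ.app X.A)) := by
              rw [Functor.map_comp]
              simp only [Category.assoc]
          _ = (T : A ⥤ A).map ((T : A ⥤ A).map X.a) ≫
                T.μ.app ((G : A ⥤ A).obj X.A) ≫ E.lam.app X.A := by
              rw [← E.comp_mul]
          _ = (T.μ.app X.A ≫ (T : A ⥤ A).map X.a) ≫ E.lam.app X.A := by
              rw [← Category.assoc, hnat]
          _ = T.μ.app X.A ≫ (T : A ⥤ A).map X.a ≫ E.lam.app X.A := by
              rw [Category.assoc] }
  naturality X Y f := by
    ext
    show (T : A ⥤ A).map ((T : A ⥤ A).map f.f) ≫ T.μ.app Y.A =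
      T.μ.app X.A ≫ (T : A ⥤ A).map f.f
    simpa using T.μ.naturality f.f

/-- The lifting `T̂` of the monad `T` to the Eilenberg–Moore category `A^G`
along the entwining `λ`. -/
def liftedMonad : Monad (G.Coalgebra) where
  toFunctor := E.liftFunctorT
  η := E.liftEta
  μ := E.liftMu
  assoc X := by ext; exact T.assoc X.A
  left_unit X := by ext; exact T.left_unit X.A
  right_unit X := by ext; exact T.right_unit X.A


end Entwining


namespace Entwining

variable {A : Type*} [Category A] {F : Monad A} {G : Comonad A} (E : Entwining F G)

/-- The canonical natural transformation assembling the structure morphisms of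
coalgebras over a comonad. -/
@[simps]
def coalgStructNat {C : Type*} [Category C] (H : Comonad C) :
    H.forget ⟶ H.forget ⋙ (H : C ⥤ C) where
  app X := X.a
  naturality X Y f := by exact f.h.symm

/-- The left `Ĝ`-comodule structure `β_{K'} : φ_F ⟶ Ĝφ_F` on the free functor `φ_F`
corresponding to a functor `K' : A ⥤ (A_F)^{Ĝ}` with `U^{Ĝ} ∘ K' = φ_F`. -/
def structOfK (K' : A ⥤ E.liftedComonad.Coalgebra)
    (hK' : K' ⋙ Comonad.forget E.liftedComonad = F.free) :
    F.free ⟶ F.free ⋙ (E.liftedComonad : F.Algebra ⥤ F.Algebra) :=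
  eqToHom hK'.symm ≫ Functor.whiskerLeft K' (coalgStructNat E.liftedComonad) ≫
    Functor.whiskerRight (eqToHom hK') (E.liftedComonad : F.Algebra ⥤ F.Algebra)

/-- The underlying left `G`-comodule structure `β = U_F(β_{K'}) : F ⟶ GF` on the
functor `F` induced by a functor `K'` as above. -/
def inducedComod (K' : A ⥤ E.liftedComonad.Coalgebra)
    (hK' : K' ⋙ Comonad.forget E.liftedComonad = F.free) :
    (F : A ⥤ A) ⟶ (F : A ⥤ A) ⋙ (G : A ⥤ A) :=
  Functor.whiskerRight (E.structOfK K' hK') F.forget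


/-- The right `Ĝ`-comodule structure `α : U_F ⟶ U_F Ĝ` on the forgetful functor
corresponding to the functor `K'`; its component at `(a, h_a)` is the morphism
`α_{(a,h_a)} : a ⟶ G(a)`. -/
def comodOnForget (K' : A ⥤ E.liftedComonad.Coalgebra)
    (hK' : K' ⋙ Comonad.forget E.liftedComonad = F.free) :
    F.forget ⟶ (E.liftedComonad : F.Algebra ⥤ F.Algebra) ⋙ F.forget :=
  Functor.whiskerLeft F.forget F.adj.unit ≫
    Functor.whiskerRight (Functor.whiskerLeft F.forget (E.structOfK K' hK')) F.forget ≫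
      Functor.whiskerRight (Functor.whiskerRight F.adj.counit
        (E.liftedComonad : F.Algebra ⥤ F.Algebra)) F.forget

end Entwining

/-
A functor `K'` over `φ_T` factors, up to isomorphism, as the comparison functor of
`φ_T ⊣ U_T` followed by the functor on coalgebras induced by a comonad morphism
`t : φ_T U_T ⟶ Ĝ`, and `U_T(t)` at `(a, h_a)` is `G(h_a) ∘ λ_a ∘ T(α_{(a,h_a)})`. So if `t` is
invertible and `φ_T` is comonadic, `K'` is an equivalence. Conversely, if `K'` is an equivalence,
the coalgebra map `κ : K'(a) ⟶ Ĝ-cofree(a, h_a)` transposing the counit satisfies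
`K'(g) ≫ κ = (transpose of g)`, so composing with `κ` is bijective on maps out of every `K'(c)`;
as `K'` is essentially surjective, `κ`, hence `t`, is an isomorphism by Yoneda, and then the
comparison functor is an equivalence too. Applied to the comparison functor of a second
adjunction, the same argument shows that comonadicity of `φ_T` does not depend on the chosen
right adjoint.
-/

universe v w

section CoalgebraFunctor

variable {C : Type*} [Category.{v} C]

@[simps]
def coalgebraFunctorOfComonadHom {M N : Comonad C} (h : M ⟶ N) :
    M.Coalgebra ⥤ N.Coalgebra where
  obj X :=
    { A := X.A
      a := X.a ≫ h.app X.A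
      counit := by simp [X.counit]
      coassoc := by
        simp only [Category.assoc, h.app_δ, Functor.map_comp, X.coassoc_assoc]
        rw [← h.naturality_assoc] }
  map f :=
    { f := f.f
      h := by simp only [Category.assoc, ← h.naturality, f.h_assoc] }

@[simp]
theorem ComonadIso.hom_inv_id_app {M N : Comonad C} (h : M ≅ N) (X : C) :
    h.hom.app X ≫ h.inv.app X = 𝟙 _ :=
  ((comonadToFunctor C).mapIso h).hom_inv_id_app X

@[simp]
theorem ComonadIso.inv_hom_id_app {M N : Comonad C} (h : M ≅ N) (X : C) :
    h.inv.app X ≫ h.hom.app X = 𝟙 _ :=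
  ((comonadToFunctor C).mapIso h).inv_hom_id_app X

def coalgebraEquivOfIsoComonads {M N : Comonad C} (h : M ≅ N) :
    M.Coalgebra ≌ N.Coalgebra where
  functor := coalgebraFunctorOfComonadHom h.hom
  inverse := coalgebraFunctorOfComonadHom h.inv
  unitIso := NatIso.ofComponents
    (fun X => Comonad.Coalgebra.isoMk (Iso.refl X.A)
      (by dsimp [coalgebraFunctorOfComonadHom]; simp))
    (fun f => by ext; exact (Category.comp_id _).trans (Category.id_comp _).symm)
  counitIso := NatIso.ofComponents
    (fun X => Comonad.Coalgebra.isoMk (Iso.refl X.A)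
      (by dsimp [coalgebraFunctorOfComonadHom]; simp))
    (fun f => by ext; exact (Category.comp_id _).trans (Category.id_comp _).symm)
  functor_unitIso_comp X := by ext; exact Category.comp_id _

instance {M N : Comonad C} (h : M ⟶ N) [IsIso h] :
    (coalgebraFunctorOfComonadHom h).IsEquivalence :=
  (coalgebraEquivOfIsoComonads (asIso h)).isEquivalence_functor

theorem comonadHom_isIso_iff_isIso_app {M N : Comonad C} (t : M ⟶ N) :
    IsIso t ↔ ∀ X, IsIso (t.app X) := by
  refine ⟨fun _ X => ?_, fun h => ?_⟩
  · exact inferInstanceAs (IsIso (((comonadToFunctor C).map t).app X))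
  · have : IsIso ((comonadToFunctor C).map t) := @NatIso.isIso_of_isIso_app _ _ _ _ _ _ _ h
    exact isIso_of_reflects_iso t (comonadToFunctor C)

end CoalgebraFunctor

theorem isIso_of_bijective_map_comp {C E : Type*} [Category C] [Category E]
    (K : C ⥤ E) [K.IsEquivalence] {r : C} {Z : E} (κ : K.obj r ⟶ Z)
    (hκ : ∀ c, Function.Bijective fun g : c ⟶ r => K.map g ≫ κ) : IsIso κ := by
  refine isIso_of_yoneda_map_bijective κ fun Y => ?_
  let i := K.objObjPreimageIso Y
  have : (fun f : Y ⟶ K.obj r => f ≫ κ) = i.homFromEquiv ∘ (fun g => K.map g ≫ κ) ∘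
      K.preimage ∘ i.homFromEquiv.symm := by
    funext f
    simp [Iso.homFromEquiv]
  rw [this]
  exact i.homFromEquiv.bijective.comp <| (hκ _).comp <|
    (Functor.FullyFaithful.ofFullyFaithful K).homEquiv.symm.bijective.comp
      i.homFromEquiv.symm.bijective

section Lift

-- The left adjoint is taken to be literally `K ⋙ N.forget`, so no transport along
-- an equation `K ⋙ N.forget = L` is needed.
variable {C D : Type*} [Category.{w} C] [Category.{v} D] {N : Comonad D} (K : C ⥤ N.Coalgebra)
  {R : D ⥤ C} (adj : K ⋙ N.forget ⊣ R)

def liftCofreeHom (X : D) : K.obj (R.obj X) ⟶ N.cofree.obj X :=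
  N.adj.homEquiv _ _ (adj.counit.app X)

theorem map_comp_liftCofreeHom {c : C} {X : D} (g : c ⟶ R.obj X) :
    K.map g ≫ liftCofreeHom K adj X = N.adj.homEquiv _ _ ((adj.homEquiv _ _).symm g) := by
  rw [liftCofreeHom, ← Adjunction.homEquiv_naturality_left, Adjunction.homEquiv_counit]
  rfl

theorem liftCofreeHom_naturality {X Y : D} (f : X ⟶ Y) :
    K.map (R.map f) ≫ liftCofreeHom K adj Y = liftCofreeHom K adj X ≫ N.cofree.map f := by
  rw [map_comp_liftCofreeHom, liftCofreeHom, ← Adjunction.homEquiv_naturality_right,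
    Adjunction.homEquiv_counit, adj.counit_naturality]

theorem liftCofreeHom_f_comp_ε (X : D) :
    (liftCofreeHom K adj X).f ≫ N.ε.app X = adj.counit.app X := by
  have := (N.adj.homEquiv _ _).symm_apply_apply (adj.counit.app X)
  rwa [Adjunction.homEquiv_counit, Comonad.adj_counit] at this

theorem map_unit_comp_liftCofreeHom (c : C) :
    (K.map (adj.unit.app c) ≫ liftCofreeHom K adj _).f = (K.obj c).a := by
  rw [map_comp_liftCofreeHom, Adjunction.homEquiv_counit]
  erw [adj.left_triangle_components, Adjunction.homEquiv_id, Comonad.adj_unit]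
  rfl

def comonadHomOfLift : adj.toComonad ⟶ N where
  app X := (liftCofreeHom K adj X).f
  naturality _ _ f := congrArg Comonad.Coalgebra.Hom.f (liftCofreeHom_naturality K adj f)
  app_ε := liftCofreeHom_f_comp_ε K adj
  app_δ X :=
    (liftCofreeHom K adj X).h.symm.trans <|
      (congrArg (· ≫ _) (map_unit_comp_liftCofreeHom K adj (R.obj X)).symm).trans
        (Category.assoc _ _ _)

theorem comonadHomOfLift_app (X : D) :
    (comonadHomOfLift K adj).app X = (K.obj (R.obj X)).a ≫ N.map (adj.counit.app X) := by
  change (liftCofreeHom K adj X).f = _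
  rw [liftCofreeHom, Adjunction.homEquiv_unit, Comonad.adj_unit]
  rfl

def liftIsoComparison :
    K ≅ Comonad.comparison adj ⋙ coalgebraFunctorOfComonadHom (comonadHomOfLift K adj) :=
  NatIso.ofComponents
    (fun c => Comonad.Coalgebra.isoMk (Iso.refl _) (by
      erw [CategoryTheory.Functor.map_id, Category.comp_id, Category.id_comp]
      exact (map_unit_comp_liftCofreeHom K adj c).symm))
    (fun f => by ext; exact (Category.comp_id _).trans (Category.id_comp _).symm)

theorem isIso_comonadHomOfLift [K.IsEquivalence] : IsIso (comonadHomOfLift K adj) := by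
  refine (comonadHom_isIso_iff_isIso_app _).2 fun X => ?_
  have : IsIso (liftCofreeHom K adj X) := isIso_of_bijective_map_comp K _ fun c => by
    rw [funext (map_comp_liftCofreeHom K adj)]
    exact (N.adj.homEquiv _ _).bijective.comp (adj.homEquiv _ _).symm.bijective
  exact inferInstanceAs (IsIso (N.forget.map (liftCofreeHom K adj X)))

theorem isEquivalence_iff_isIso_comonadHomOfLift :
    K.IsEquivalence ↔ IsIso (comonadHomOfLift K adj) ∧ (Comonad.comparison adj).IsEquivalence := by
  refine ⟨fun _ => ?_, fun ⟨_, _⟩ => Functor.isEquivalence_of_iso (liftIsoComparison K adj).symm⟩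
  have := isIso_comonadHomOfLift K adj
  have := Functor.isEquivalence_of_iso (liftIsoComparison K adj)
  exact ⟨inferInstance,
    Functor.isEquivalence_of_comp_right _ (coalgebraFunctorOfComonadHom (comonadHomOfLift K adj))⟩

end Lift

theorem nonempty_comonadicLeftAdjoint_iff {C D : Type*} [Category C] [Category D] {L : C ⥤ D}
    {R : D ⥤ C} (adj : L ⊣ R) :
    Nonempty (ComonadicLeftAdjoint L) ↔ (Comonad.comparison adj).IsEquivalence := by
  refine ⟨fun ⟨_⟩ => ?_, fun h => ⟨⟨R, adj, h⟩⟩⟩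
  let adj' : Comonad.comparison (comonadicAdjunction L) ⋙ Comonad.forget _ ⊣ R := adj
  have : (Comonad.comparison (comonadicAdjunction L)).IsEquivalence := ComonadicLeftAdjoint.eqv
  exact ((isEquivalence_iff_isIso_comonadHomOfLift _ adj').1 this).2

theorem Monad.map_unit_comp_f_comp_a {A : Type*} [Category A] (T : Monad A) {a : A}
    {Z : T.Algebra} (f : T.free.obj a ⟶ Z) : (T : A ⥤ A).map (T.η.app a ≫ f.f) ≫ Z.a = f.f := by
  have := congrArg Monad.Algebra.Hom.f ((T.adj.homEquiv _ _).symm_apply_apply f)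
  rwa [Adjunction.homEquiv_counit, Adjunction.homEquiv_unit, Monad.adj_unit,
    Monad.adj_counit] at this

theorem Entwining.map_comodOnForget_comp_lam_comp_map {A : Type*} [Category A] {T : Monad A}
    {G : Comonad A} (E : Entwining T G) (K' : A ⥤ E.liftedComonad.Coalgebra)
    (hK' : K' ⋙ Comonad.forget E.liftedComonad = T.free) (X : T.Algebra) :
    (T : A ⥤ A).map ((E.comodOnForget K' hK').app X) ≫ E.lam.app X.A ≫ (G : A ⥤ A).map X.a =
      (((eqToIso hK').app X.A).inv ≫
        (comonadHomOfLift K' (T.adj.ofNatIsoLeft (eqToIso hK'.symm))).app X).f := by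
  have hα : (E.comodOnForget K' hK').app X = T.adj.unit.app X.A ≫
      ((E.structOfK K' hK').app X.A ≫ E.liftedComonad.map (T.adj.counit.app X)).f := rfl
  rw [hα, Monad.adj_unit]
  refine (Monad.map_unit_comp_f_comp_a T
    ((E.structOfK K' hK').app X.A ≫ E.liftedComonad.map (T.adj.counit.app X))).trans ?_
  erw [comonadHomOfLift_app]
  -- unfold `structOfK` and the counit of the transported adjunction
  show (((eqToHom hK'.symm).app X.A ≫ (K'.obj X.A).a ≫
      E.liftedComonad.map ((eqToHom hK').app X.A)) ≫ E.liftedComonad.map (T.adj.counit.app X)).f =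
    ((eqToHom hK'.symm).app X.A ≫ (K'.obj X.A).a ≫
      E.liftedComonad.map ((eqToHom hK').app X.A ≫ T.adj.counit.app X)).f
  exact congrArg Monad.Algebra.Hom.f <| (Category.assoc _ _ _).trans <| congrArg (_ ≫ ·) <|
    (Category.assoc _ _ _).trans <| congrArg (_ ≫ ·) (E.liftedComonad.map_comp _ _).symm

open Entwining in
/-- **Theorem 2.3.**  Let `λ : TG ⟶ GT` be an entwining from a monad `T` to a comonad
`G` on `A`, `Ĝ` the lifting of `G` to `A_T`, and `K' : A ⥤ (A_T)^{Ĝ}` a functor with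
`U^{Ĝ} ∘ K' = φ_T`, with corresponding right `Ĝ`-comodule structure on `U_T` having
components `α_{(a,h_a)} : a ⟶ G(a)`.  Then `K'` is an equivalence of categories if and
only if the composite `G(h_a) ∘ λ_a ∘ T(α_{(a,h_a)})` is an isomorphism for every
`(a, h_a) ∈ A_T` and the free functor `φ_T` is comonadic. -/
theorem statement8 {A : Type*} [Category A] (T : Monad A) (G : Comonad A)
    (E : Entwining T G) (K' : A ⥤ E.liftedComonad.Coalgebra)
    (hK' : K' ⋙ Comonad.forget E.liftedComonad = T.free) :
    K'.IsEquivalence ↔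
      ((∀ X : T.Algebra,
          IsIso ((T : A ⥤ A).map ((E.comodOnForget K' hK').app X) ≫
            E.lam.app X.A ≫ (G : A ⥤ A).map X.a)) ∧
        Nonempty (ComonadicLeftAdjoint T.free)) := by
  let adj := T.adj.ofNatIsoLeft (eqToIso hK'.symm)
  have comonadic : Nonempty (ComonadicLeftAdjoint T.free) ↔
      (Comonad.comparison adj).IsEquivalence := by
    rw [← nonempty_comonadicLeftAdjoint_iff adj, hK']
  rw [isEquivalence_iff_isIso_comonadHomOfLift K' adj, comonadHom_isIso_iff_isIso_app, comonadic]
  refine and_congr_left' (forall_congr' fun X => ?_)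
  rw [map_comodOnForget_comp_lam_comp_map]
  exact (@isIso_comp_left_iff _ _ _ _ _ _ _ (Iso.isIso_inv _)).symm.trans
    (isIso_iff_of_reflects_iso _ T.forget).symm

end Paper
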